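/- arXiv:1106.1104 — 3 statements merged into one kernel-verified Lean document; each statement's English description precedes it below -/
import Mathlib

section
/- Let I = (F_t)_{t∈[0,1]} be an identity isotopy on the 2-sphere S² (i.e., F₀ = id) and let z₁, z₂, z₃ be three distinct fixed points of F₁. Then there exists another identity isotopy I' = (F'_t)_{t∈[0,1]} from id to F₁ such that F'_t(z_i) = z_i for all t ∈ [0,1] and i = 1, 2, 3. -/
/-- An identity isotopy on a topological space: a jointly continuous family of
homeomorphisms starting at the identity. -/
def IsIdentityIsotopy {X : Type*} [TopologicalSpace X] (F : unitInterval → X → X) : Prop :=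
  Continuous (fun p : unitInterval × X => F p.1 p.2) ∧
  (∀ t, ∃ h : X ≃ₜ X, F t = h) ∧ F 0 = id

/-!
Let `D t` be the Möbius transformation sending `F t z₁, F t z₂, F t z₃` to `0, 1, ∞`. Then
`F' t = (D 0)⁻¹ ∘ D t ∘ F t` fixes the three points, and `F' 1 = F 1` because a Möbius
transformation is determined by its values at three points. A matrix representing `D t` can only be
chosen continuously locally in `t`: near a given time, move a point outside the triple to `∞` by a
fixed Möbius map, so that the triple gets finite coordinates, and take the cross-ratio matrix of
these coordinates. Continuity of `F'` then follows from the joint continuity of the action of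
`GL(2)` on the Riemann sphere.
-/

open Filter Topology Set OnePoint

section GeneralLinearGroup

variable {n K : Type*} [Fintype n] [DecidableEq n] [Field K] [TopologicalSpace K]
  [IsTopologicalRing K] [ContinuousInv₀ K]

theorem Matrix.GeneralLinearGroup.isEmbedding_val :
    IsEmbedding (Units.val : GL n K → Matrix n n K) :=
  Units.isEmbedding_val_mk' (f := Inv.inv)
    (fun A hA => (continuousAt_matrix_inv A (by
      rw [Ring.inverse_eq_inv']
      exact continuousAt_inv₀ ((Matrix.isUnit_iff_isUnit_det A).1 hA).ne_zero)).continuousWithinAt)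
    (fun u => (Matrix.coe_units_inv u).symm)

theorem Matrix.GeneralLinearGroup.exists_continuousAt_val_eventuallyEq [T1Space K]
    {X : Type*} [TopologicalSpace X] {M : X → Matrix n n K} {x₀ : X} (hM : ContinuousAt M x₀)
    (hdet : (M x₀).det ≠ 0) :
    ∃ G : X → GL n K, ContinuousAt G x₀ ∧ ∀ᶠ x in 𝓝 x₀, (G x : Matrix n n K) = M x := by
  classical
  let G : X → GL n K := fun x => if h : (M x).det ≠ 0 then mkOfDetNeZero (M x) h else 1
  have hG : ∀ᶠ x in 𝓝 x₀, (G x : Matrix n n K) = M x :=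
    (continuous_id.matrix_det.continuousAt.comp hM).eventually_ne hdet |>.mono
      fun x (hx : (M x).det ≠ 0) => by simp [G, hx]
  exact ⟨G, isEmbedding_val.continuousAt_iff.2 (hM.congr (hG.mono fun _ h => h.symm)), hG⟩

end GeneralLinearGroup

namespace OnePoint

section Field

variable {K : Type*} [Field K]

def inversionAt (p : K) : GL (Fin 2) K :=
  Matrix.GeneralLinearGroup.mkOfDetNeZero !![0, 1; 1, -p] (by simp)

theorem inversionAt_zero_mul_self : inversionAt (0 : K) * inversionAt 0 = 1 := by
  ext i j
  fin_cases i <;> fin_cases j <;> simp [inversionAt]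

theorem inversionAt_zero_mul_apply_one (g : GL (Fin 2) K) (j : Fin 2) :
    (inversionAt (0 : K) * g : GL (Fin 2) K) 1 j = g 0 j := by
  simp [inversionAt, Matrix.mul_apply]

def crossRatioMatrix (x y z : K) : Matrix (Fin 2) (Fin 2) K :=
  !![y - z, -x * (y - z); y - x, -z * (y - x)]

theorem det_crossRatioMatrix (x y z : K) :
    (crossRatioMatrix x y z).det = (x - z) * (y - z) * (y - x) := by
  simp [crossRatioMatrix, Matrix.det_fin_two]
  ring

variable [DecidableEq K]

theorem inversionAt_smul_coe (p x : K) :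
    inversionAt p • (x : OnePoint K) = if x = p then ∞ else ((x - p)⁻¹ : K) := by
  simp [inversionAt, smul_some_eq_ite, sub_eq_add_neg, add_neg_eq_zero]

theorem inversionAt_smul_infty (p : K) : inversionAt p • (∞ : OnePoint K) = (0 : K) := by
  simp [inversionAt, smul_infty_eq_ite]

def SendsToZeroOneInfty (g : GL (Fin 2) K) (a b c : OnePoint K) : Prop :=
  g • a = (0 : K) ∧ g • b = (1 : K) ∧ g • c = ∞

namespace SendsToZeroOneInfty

variable {g g' σ : GL (Fin 2) K} {a b c : OnePoint K}

theorem pairwise_ne (hg : SendsToZeroOneInfty g a b c) : a ≠ b ∧ a ≠ c ∧ b ≠ c := by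
  obtain ⟨ha, hb, hc⟩ := hg
  refine ⟨?_, ?_, ?_⟩ <;> rintro rfl <;> simp_all

theorem mul_right (hg : SendsToZeroOneInfty g (σ • a) (σ • b) (σ • c)) :
    SendsToZeroOneInfty (g * σ) a b c := by
  simpa only [SendsToZeroOneInfty, mul_smul] using hg

theorem smul_eq_self (h : SendsToZeroOneInfty g (0 : K) (1 : K) ∞) (z : OnePoint K) :
    g • z = z := by
  obtain ⟨h0, h1, hinf⟩ := h
  have h10 : g 1 0 = 0 := smul_infty_eq_self_iff.1 hinf
  have hdet : g 0 0 * g 1 1 ≠ 0 := by simpa [Matrix.det_fin_two, h10] using g.det_ne_zero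
  have h11 : g 1 1 ≠ 0 := right_ne_zero_of_mul hdet
  have h01 : g 0 1 = 0 := by simpa [smul_some_eq_ite, h10, h11] using h0
  have h00 : g 0 0 = g 1 1 := by
    simpa [smul_some_eq_ite, h10, h11, h01, div_eq_one_iff_eq] using h1
  cases z with
  | infty => exact hinf
  | coe x => simp [smul_some_eq_ite, h10, h11, h01, h00]

theorem smul_eq (hg : SendsToZeroOneInfty g a b c) (hg' : SendsToZeroOneInfty g' a b c)
    (z : OnePoint K) : g • z = g' • z := by
  have hfix : SendsToZeroOneInfty (g * g'⁻¹) (0 : K) (1 : K) ∞ := by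
    refine mul_right ?_
    rwa [← hg'.1, ← hg'.2.1, ← hg'.2.2, inv_smul_smul, inv_smul_smul, inv_smul_smul]
  rw [← hfix.smul_eq_self (g' • z), mul_smul, inv_smul_smul]

end SendsToZeroOneInfty

theorem sendsToZeroOneInfty_crossRatio {x y z : K} (h : (crossRatioMatrix x y z).det ≠ 0) :
    SendsToZeroOneInfty (Matrix.GeneralLinearGroup.mkOfDetNeZero _ h) x y z := by
  obtain ⟨⟨hxz, hyz⟩, hyx⟩ : (x - z ≠ 0 ∧ y - z ≠ 0) ∧ y - x ≠ 0 := by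
    simpa [det_crossRatioMatrix, not_or] using h
  refine ⟨?_, ?_, ?_⟩ <;> simp only [smul_some_eq_ite, crossRatioMatrix,
    Matrix.GeneralLinearGroup.val_mkOfDetNeZero, Matrix.of_apply, Matrix.cons_val',
    Matrix.cons_val_zero, Matrix.cons_val_one, Matrix.empty_val', Matrix.cons_val_fin_one]
  · rw [show (y - x) * x + -z * (y - x) = (y - x) * (x - z) by ring, if_neg (mul_ne_zero hyx hxz),
      show (y - z) * x + -x * (y - z) = 0 by ring, zero_div]
  · rw [show (y - x) * y + -z * (y - x) = (y - x) * (y - z) by ring, if_neg (mul_ne_zero hyx hyz),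
      show (y - z) * y + -x * (y - z) = (y - x) * (y - z) by ring, div_self (mul_ne_zero hyx hyz)]
  · rw [if_pos (by ring)]

end Field

section Normed

variable {K : Type*} [NontriviallyNormedField K]

theorem continuous_crossRatioMatrix :
    Continuous fun v : K × K × K => crossRatioMatrix v.1 v.2.1 v.2.2 :=
  continuous_matrix fun i j => by
    fin_cases i <;> fin_cases j <;> simp [crossRatioMatrix] <;> fun_prop

variable [DecidableEq K]

theorem continuousAt_smul_coe_of_ne_zero {g : GL (Fin 2) K} {x : K}
    (hx : g 1 0 * x + g 1 1 ≠ 0) :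
    ContinuousAt (fun q : GL (Fin 2) K × OnePoint K => q.1 • q.2) (g, (x : OnePoint K)) := by
  refine ((IsOpenEmbedding.id.prodMap isOpenEmbedding_coe).continuousAt_iff (x := (g, x))).1 ?_
  have hopen : IsOpen {q : GL (Fin 2) K × K | q.1 1 0 * q.2 + q.1 1 1 ≠ 0} :=
    isOpen_ne_fun (by fun_prop) continuous_const
  refine ContinuousAt.congr (f := fun q : GL (Fin 2) K × K =>
      (((q.1 0 0 * q.2 + q.1 0 1) / (q.1 1 0 * q.2 + q.1 1 1) : K) : OnePoint K)) ?_ ?_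
  · exact continuous_coe.continuousAt.comp (ContinuousAt.div (by fun_prop) (by fun_prop) hx)
  · filter_upwards [hopen.mem_nhds hx] with q hq
    simp [smul_some_eq_ite, hq]

variable [ProperSpace K]

theorem continuous_inversionAt_zero_smul :
    Continuous fun z : OnePoint K => inversionAt (0 : K) • z := by
  have hcoe : ∀ x : K, x ≠ 0 → inversionAt (0 : K) • (x : OnePoint K) = (x⁻¹ : K) :=
    fun x hx => by simp [inversionAt_smul_coe, hx]
  have hcobounded : coclosedCompact K = Bornology.cobounded K := by
    rw [coclosedCompact_eq_cocompact, Metric.cobounded_eq_cocompact]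
  rw [continuous_iff, inversionAt_smul_infty, continuous_iff_continuousAt]
  refine ⟨?_, fun x => ?_⟩
  · rw [hcobounded]
    refine ((continuous_coe.tendsto 0).comp tendsto_inv₀_cobounded).congr' ?_
    filter_upwards [Bornology.isBounded_def.1 (Bornology.isBounded_singleton (x := (0 : K)))]
      with x hx using (hcoe x hx).symm
  rcases eq_or_ne x 0 with rfl | hx
  · have hzero : inversionAt (0 : K) • ((0 : K) : OnePoint K) = ∞ := by
      simp [inversionAt_smul_coe]
    rw [ContinuousAt, ← nhdsNE_sup_pure, hzero, tendsto_sup]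
    refine ⟨(tendsto_coe_infty.comp (hcobounded ▸ tendsto_inv₀_nhdsNE_zero)).congr' ?_,
      hzero ▸ tendsto_pure_nhds _ _⟩
    filter_upwards [self_mem_nhdsWithin] with y hy using (hcoe y hy).symm
  · refine (continuous_coe.continuousAt.comp (continuousAt_inv₀ hx)).congr ?_
    filter_upwards [isOpen_ne.mem_nhds hx] with y hy using (hcoe y hy).symm

theorem continuousAt_smul_coe (g : GL (Fin 2) K) (x : K) :
    ContinuousAt (fun q : GL (Fin 2) K × OnePoint K => q.1 • q.2) (g, (x : OnePoint K)) := by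
  by_cases hx : g 1 0 * x + g 1 1 = 0
  · -- the denominator of `w * g` at `x` is the numerator of `g`, which does not vanish with it
    set w := inversionAt (0 : K)
    have hnum : (w * g) 1 0 * x + (w * g) 1 1 ≠ 0 := by
      rw [inversionAt_zero_mul_apply_one, inversionAt_zero_mul_apply_one]
      intro h
      apply g.det_ne_zero
      rw [Matrix.det_fin_two]
      linear_combination g 0 0 * hx - g 1 0 * h
    have hfactor : (fun q : GL (Fin 2) K × OnePoint K => q.1 • q.2) =
        fun q => w • ((w * q.1) • q.2) := by
      funext q
      rw [← mul_smul, ← mul_assoc, inversionAt_zero_mul_self, one_mul]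
    have hinner : ContinuousAt (fun q : GL (Fin 2) K × OnePoint K => (w * q.1) • q.2)
        (g, (x : OnePoint K)) :=
      ContinuousAt.comp (g := fun q : GL (Fin 2) K × OnePoint K => q.1 • q.2)
        (f := fun q => (w * q.1, q.2)) (x := (g, (x : OnePoint K)))
        (continuousAt_smul_coe_of_ne_zero hnum) (by fun_prop)
    rw [hfactor]
    exact continuous_inversionAt_zero_smul.continuousAt.comp hinner
  · exact continuousAt_smul_coe_of_ne_zero hx

theorem continuousAt_smul_infty (g : GL (Fin 2) K) :
    ContinuousAt (fun q : GL (Fin 2) K × OnePoint K => q.1 • q.2) (g, ∞) := by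
  set w := inversionAt (0 : K)
  have hfactor : (fun q : GL (Fin 2) K × OnePoint K => q.1 • q.2) =
      fun q => (q.1 * w) • (w • q.2) := by
    funext q
    rw [← mul_smul, mul_assoc, inversionAt_zero_mul_self, mul_one]
  rw [hfactor]
  refine ContinuousAt.comp (g := fun q : GL (Fin 2) K × OnePoint K => q.1 • q.2)
    (f := fun q : GL (Fin 2) K × OnePoint K => (q.1 * w, w • q.2)) ?_
    ((continuous_fst.mul continuous_const).prodMk
      (continuous_inversionAt_zero_smul.comp continuous_snd)).continuousAt
  simpa [w, inversionAt_smul_infty] using continuousAt_smul_coe (g * w) 0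

instance : ContinuousSMul (GL (Fin 2) K) (OnePoint K) where
  continuous_smul := continuous_iff_continuousAt.2 fun
    | (g, (x : K)) => continuousAt_smul_coe g x
    | (g, ∞) => continuousAt_smul_infty g

theorem exists_sendsToZeroOneInfty_nhds {a b c : OnePoint K} (hab : a ≠ b) (hac : a ≠ c)
    (hbc : b ≠ c) :
    ∃ G : OnePoint K × OnePoint K × OnePoint K → GL (Fin 2) K, ContinuousAt G (a, b, c) ∧
      ∀ᶠ q in 𝓝 (a, b, c), SendsToZeroOneInfty (G q) q.1 q.2.1 q.2.2 := by
  obtain ⟨p, hp⟩ := ((({a, b, c} : Set (OnePoint K)).toFinite.preimage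
    coe_injective.injOn).infinite_compl).nonempty
  simp only [mem_compl_iff, mem_preimage, mem_insert_iff, mem_singleton_iff, not_or] at hp
  -- `σ` sends `p` to `∞`, so `φ` gives finite coordinates to all points other than `p`
  set σ := inversionAt p
  set φ : OnePoint K → K := fun z => (σ • z).elim 0 id
  have hφ : ∀ z ≠ (p : OnePoint K), (φ z : OnePoint K) = σ • z := by
    intro z hz
    have hσp : σ • (p : OnePoint K) = ∞ := by simp [σ, inversionAt_smul_coe]
    obtain ⟨w, hw⟩ := ne_infty_iff_exists.1 fun h => hz (MulAction.injective σ (h.trans hσp.symm))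
    simp [φ, ← hw]
  have hφc : ∀ z ≠ (p : OnePoint K), ContinuousAt φ z := by
    intro z hz
    refine ContinuousAt.comp (g := fun w : OnePoint K => w.elim 0 id) ?_
      (continuous_const_smul σ).continuousAt
    rw [← hφ z hz]
    exact continuousAt_coe.2 continuousAt_id
  clear_value φ σ
  have hφ₁ := (hφc a (Ne.symm hp.1)).comp (continuousAt_fst (p := (a, b, c)))
  have hφ₂ := (hφc b (Ne.symm hp.2.1)).comp (continuousAt_snd (p := (a, b, c))).fst
  have hφ₃ := (hφc c (Ne.symm hp.2.2)).comp (continuousAt_snd (p := (a, b, c))).snd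
  have hCR : ContinuousAt (fun q : OnePoint K × OnePoint K × OnePoint K =>
      crossRatioMatrix (φ q.1) (φ q.2.1) (φ q.2.2)) (a, b, c) :=
    (continuous_crossRatioMatrix (K := K)).continuousAt.comp (x := (a, b, c))
      (f := fun q : OnePoint K × OnePoint K × OnePoint K => (φ q.1, φ q.2.1, φ q.2.2))
      (hφ₁.prodMk (hφ₂.prodMk hφ₃))
  have hCRdet : (crossRatioMatrix (φ a) (φ b) (φ c)).det ≠ 0 := by
    have hinj : ∀ {z w : OnePoint K}, z ≠ ↑p → w ≠ ↑p → z ≠ w → φ z - φ w ≠ 0 :=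
      fun hz hw hzw h => hzw (MulAction.injective σ
        (show σ • _ = σ • _ by rw [← hφ _ hz, ← hφ _ hw, sub_eq_zero.1 h]))
    rw [det_crossRatioMatrix]
    exact mul_ne_zero (mul_ne_zero (hinj (Ne.symm hp.1) (Ne.symm hp.2.2) hac)
      (hinj (Ne.symm hp.2.1) (Ne.symm hp.2.2) hbc)) (hinj (Ne.symm hp.2.1) (Ne.symm hp.1) hab.symm)
  have hM : ContinuousAt (fun q : OnePoint K × OnePoint K × OnePoint K =>
      crossRatioMatrix (φ q.1) (φ q.2.1) (φ q.2.2) * (σ : Matrix (Fin 2) (Fin 2) K)) (a, b, c) :=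
    hCR.mul continuousAt_const
  obtain ⟨G, hG, hGM⟩ := Matrix.GeneralLinearGroup.exists_continuousAt_val_eventuallyEq hM
    (by rw [Matrix.det_mul]; exact mul_ne_zero hCRdet σ.det_ne_zero)
  refine ⟨G, hG, ?_⟩
  filter_upwards [hGM, (continuous_id.matrix_det.continuousAt.comp hCR).eventually_ne hCRdet,
    continuousAt_fst.eventually_ne (Ne.symm hp.1),
    continuousAt_snd.fst.eventually_ne (Ne.symm hp.2.1),
    continuousAt_snd.snd.eventually_ne (Ne.symm hp.2.2)] with q hGq hq hq₁ hq₂ hq₃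
  replace hq : (crossRatioMatrix (φ q.1) (φ q.2.1) (φ q.2.2)).det ≠ 0 := hq
  have hGq' : G q = Matrix.GeneralLinearGroup.mkOfDetNeZero _ hq * σ := Units.ext (by simp [hGq])
  rw [hGq']
  refine SendsToZeroOneInfty.mul_right ?_
  rw [← hφ _ hq₁, ← hφ _ hq₂, ← hφ _ hq₃]
  exact sendsToZeroOneInfty_crossRatio hq

theorem exists_sendsToZeroOneInfty {a b c : OnePoint K} (hab : a ≠ b) (hac : a ≠ c)
    (hbc : b ≠ c) : ∃ g : GL (Fin 2) K, SendsToZeroOneInfty g a b c :=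
  let ⟨G, _, hG⟩ := exists_sendsToZeroOneInfty_nhds hab hac hbc
  ⟨G (a, b, c), hG.self_of_nhds⟩

theorem continuous_smul_of_sendsToZeroOneInfty {T : Type*} [TopologicalSpace T]
    {a b c : T → OnePoint K} (ha : Continuous a) (hb : Continuous b) (hc : Continuous c)
    {D : T → GL (Fin 2) K} (hD : ∀ t, SendsToZeroOneInfty (D t) (a t) (b t) (c t)) :
    Continuous fun p : T × OnePoint K => D p.1 • p.2 := by
  refine continuous_iff_continuousAt.2 fun ⟨t₀, z₀⟩ => ?_
  obtain ⟨hab, hac, hbc⟩ := (hD t₀).pairwise_ne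
  obtain ⟨G, hG, hGev⟩ := exists_sendsToZeroOneInfty_nhds hab hac hbc
  have habc : Continuous fun t => (a t, b t, c t) := ha.prodMk (hb.prodMk hc)
  have hev : ∀ᶠ t in 𝓝 t₀, SendsToZeroOneInfty (G (a t, b t, c t)) (a t) (b t) (c t) :=
    habc.continuousAt.eventually hGev
  refine ContinuousAt.congr (f := fun p : T × OnePoint K => G (a p.1, b p.1, c p.1) • p.2) ?_ ?_
  · have hGt : ContinuousAt (fun t => G (a t, b t, c t)) t₀ := hG.comp (x := t₀) habc.continuousAt
    exact (hGt.comp (x := (t₀, z₀)) continuousAt_fst).smul continuousAt_snd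
  · filter_upwards [hev.prod_inl_nhds z₀] with p hp using hp.smul_eq (hD p.1) p.2

end Normed

end OnePoint

/-- Given an identity isotopy `I = (F_t)` on the sphere `S² = ℂ ∪ {∞}` and three distinct
fixed points `z₁, z₂, z₃` of the time-one map `F₁`, there exists another identity isotopy
`I'` from the identity to `F₁` fixing `z₁, z₂, z₃` for all times. -/
theorem exists_isotopy_fixing_three_points
    (F : unitInterval → OnePoint ℂ → OnePoint ℂ) (hF : IsIdentityIsotopy F)
    (z₁ z₂ z₃ : OnePoint ℂ) (h12 : z₁ ≠ z₂) (h13 : z₁ ≠ z₃) (h23 : z₂ ≠ z₃)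
    (hfix₁ : F 1 z₁ = z₁) (hfix₂ : F 1 z₂ = z₂) (hfix₃ : F 1 z₃ = z₃) :
    ∃ F' : unitInterval → OnePoint ℂ → OnePoint ℂ,
      IsIdentityIsotopy F' ∧ F' 1 = F 1 ∧
      ∀ t, F' t z₁ = z₁ ∧ F' t z₂ = z₂ ∧ F' t z₃ = z₃ := by
  obtain ⟨hcont, hhomeo, hF0⟩ := hF
  have hinj : ∀ t, Function.Injective (F t) := fun t => by
    obtain ⟨h, hh⟩ := hhomeo t
    exact hh ▸ h.injective
  choose D hD using fun t =>
    exists_sendsToZeroOneInfty ((hinj t).ne h12) ((hinj t).ne h13) ((hinj t).ne h23)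
  have hD₀ : SendsToZeroOneInfty (D 0) z₁ z₂ z₃ := by simpa [hF0] using hD 0
  have hD₁ : SendsToZeroOneInfty (D 1) z₁ z₂ z₃ := by simpa [hfix₁, hfix₂, hfix₃] using hD 1
  have hpath : ∀ z, Continuous fun t => F t z := fun z => hcont.comp (Continuous.prodMk_left z)
  refine ⟨fun t z => (D 0)⁻¹ • D t • F t z, ⟨?_, fun t => ?_, ?_⟩, ?_, fun t => ?_⟩
  · exact (continuous_const_smul _).comp
      ((continuous_smul_of_sendsToZeroOneInfty (hpath z₁) (hpath z₂) (hpath z₃) hD).comp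
        (continuous_fst.prodMk hcont))
  · obtain ⟨h, hh⟩ := hhomeo t
    exact ⟨h.trans ((Homeomorph.smul (D t)).trans (Homeomorph.smul (D 0)⁻¹)), by
      funext z; simp [hh]⟩
  · funext z
    simp [hF0]
  · funext z
    simp [hD₁.smul_eq hD₀]
  · simp [inv_smul_eq_iff, hD₀.1, hD₀.2.1, hD₀.2.2, (hD t).1, (hD t).2.1, (hD t).2.2]
end

section
/- Let I = (F_t)_{t∈[0,1]} be an identity isotopy on the complex plane ℂ, and let z₁, z₂ be two distinct fixed points of F₁. Then there exists an identity isotopy I' from id_ℂ to F₁ that fixes both z₁ and z₂ at all times. -/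
namespace IsIdentityIsotopy

variable {X : Type*} [TopologicalSpace X] {F G : unitInterval → X → X}

theorem comp (hG : IsIdentityIsotopy G) (hF : IsIdentityIsotopy F) :
    IsIdentityIsotopy fun t => G t ∘ F t := by
  obtain ⟨hGc, hGh, hG0⟩ := hG
  obtain ⟨hFc, hFh, hF0⟩ := hF
  refine ⟨hGc.comp (continuous_fst.prodMk hFc), fun t => ?_, by simp [hG0, hF0]⟩
  obtain ⟨g, hg⟩ := hGh t
  obtain ⟨f, hf⟩ := hFh t
  exact ⟨f.trans g, by simp only [hg, hf]; rfl⟩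

theorem continuous_apply (hF : IsIdentityIsotopy F) (x : X) :
    Continuous fun t => F t x :=
  hF.1.comp (continuous_id.prodMk continuous_const)

theorem injective (hF : IsIdentityIsotopy F) (t : unitInterval) : Function.Injective (F t) := by
  obtain ⟨f, hf⟩ := hF.2.1 t
  exact hf ▸ f.injective

end IsIdentityIsotopy

section AffineThrough

variable {𝕜 : Type*} [Field 𝕜]

def affineThrough (a b c d : 𝕜) (z : 𝕜) : 𝕜 :=
  c + (z - a) * ((d - c) / (b - a))

@[simp]
theorem affineThrough_apply_left (a b c d : 𝕜) : affineThrough a b c d a = c := by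
  simp [affineThrough]

theorem affineThrough_apply_right {a b : 𝕜} (hab : a ≠ b) (c d : 𝕜) :
    affineThrough a b c d b = d := by
  rw [affineThrough, mul_div_cancel₀ _ (sub_ne_zero.mpr hab.symm), add_sub_cancel]

theorem affineThrough_self {a b : 𝕜} (hab : a ≠ b) : affineThrough a b a b = id := by
  funext z
  simp [affineThrough, div_self (sub_ne_zero.mpr hab.symm)]

theorem affineThrough_leftInverse {a b c d : 𝕜} (hab : a ≠ b) (hcd : c ≠ d) :
    Function.LeftInverse (affineThrough c d a b) (affineThrough a b c d) := by
  intro z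
  have hab' : b - a ≠ 0 := sub_ne_zero.mpr hab.symm
  have hcd' : d - c ≠ 0 := sub_ne_zero.mpr hcd.symm
  simp only [affineThrough]
  field_simp
  ring

variable [TopologicalSpace 𝕜] [IsTopologicalDivisionRing 𝕜]

def affineThroughHomeomorph {a b c d : 𝕜} (hab : a ≠ b) (hcd : c ≠ d) : 𝕜 ≃ₜ 𝕜 where
  toFun := affineThrough a b c d
  invFun := affineThrough c d a b
  left_inv := affineThrough_leftInverse hab hcd
  right_inv := affineThrough_leftInverse hcd hab
  continuous_toFun := by unfold affineThrough; fun_prop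
  continuous_invFun := by unfold affineThrough; fun_prop

theorem isIdentityIsotopy_affineThrough {F : unitInterval → 𝕜 → 𝕜}
    (hF : IsIdentityIsotopy F) {z₁ z₂ : 𝕜} (h12 : z₁ ≠ z₂) :
    IsIdentityIsotopy fun t => affineThrough (F t z₁) (F t z₂) z₁ z₂ := by
  have hne : ∀ t, F t z₁ ≠ F t z₂ := fun t => (hF.injective t).ne h12
  refine ⟨?_, fun t => ⟨affineThroughHomeomorph (hne t) h12, rfl⟩, ?_⟩
  · have h₁ := hF.continuous_apply z₁
    have h₂ := hF.continuous_apply z₂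
    have hden : ∀ t, F t z₂ - F t z₁ ≠ 0 := fun t => sub_ne_zero.mpr (hne t).symm
    unfold affineThrough
    fun_prop (disch := exact fun p => hden p.1)
  · simp only [hF.2.2, id, affineThrough_self h12]

end AffineThrough

/-- Given an identity isotopy `I = (F_t)` on the plane `ℂ` and two distinct fixed points
`z₁, z₂` of the time-one map `F₁`, there exists an identity isotopy `I'` from `id_ℂ` to
`F₁` fixing both `z₁` and `z₂` at all times. -/
theorem exists_isotopy_fixing_two_points
    (F : unitInterval → ℂ → ℂ) (hF : IsIdentityIsotopy F)
    (z₁ z₂ : ℂ) (h12 : z₁ ≠ z₂)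
    (hfix₁ : F 1 z₁ = z₁) (hfix₂ : F 1 z₂ = z₂) :
    ∃ F' : unitInterval → ℂ → ℂ,
      IsIdentityIsotopy F' ∧ F' 1 = F 1 ∧
      ∀ t, F' t z₁ = z₁ ∧ F' t z₂ = z₂ := by
  refine ⟨fun t => affineThrough (F t z₁) (F t z₂) z₁ z₂ ∘ F t,
    (isIdentityIsotopy_affineThrough hF h12).comp hF, ?_, fun t => ?_⟩
  · simp only [hfix₁, hfix₂, affineThrough_self h12, Function.id_comp]
  · exact ⟨affineThrough_apply_left _ _ _ _,
      affineThrough_apply_right ((hF.injective t).ne h12) _ _⟩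
end

section
/- With the notation of the transverse-foliation/linking-number setup: let q ≥ 1 and let z be a positively recurrent point of F such that the linking number i(F̃; ã, b̃, z) exists for distinct fixed points ã, b̃ of F̃. Then z is positively recurrent for F^q, the linking number i(F̃^q; ã, b̃, z) exists, and i(F̃^q; ã, b̃, z) = q · i(F̃; ã, b̃, z). -/
open Filter Topology

/-! If `z` is recurrent for `F`, then for every open `U ∋ z` there are arbitrarily large finite
sets of times whose pairwise differences are large return times to `U`: shift such a set `T` by a
return time `t` with `F^[t] z ∈ ⋂ a ∈ T, (F^[a])⁻¹' U` and add the time `0`. Two of `q + 1` such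
times are congruent mod `q`, so their difference is a return time of `F^q`. Return times of `F^q`
are return times of `F`, and the linking number rescales as `S(q m)/m = q · S(q m)/(q m)`. -/

section Recurrence

variable {X : Type*} [TopologicalSpace X] {F : X → X} {z : X}

theorem exists_finset_card_eq_iterate_sub_mem (hF : Continuous F)
    (hz : MapClusterPt z atTop (fun n => F^[n] z)) {U : Set X} (hU : IsOpen U) (hzU : z ∈ U)
    (M : ℕ) (k : ℕ) :
    ∃ T : Finset ℕ, T.card = k + 1 ∧ (∀ a ∈ T, F^[a] z ∈ U) ∧
      ∀ a ∈ T, ∀ b ∈ T, a < b → M < b - a ∧ F^[b - a] z ∈ U := by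
  induction k with
  | zero => exact ⟨{0}, rfl, by simpa using hzU, by simp⟩
  | succ k ih =>
    obtain ⟨T, hcard, hTU, hgap⟩ := ih
    have hW : (⋂ a ∈ T, (F^[a]) ⁻¹' U) ∈ 𝓝 z := (biInter_finset_mem T).2 fun a ha =>
      (hF.iterate a).continuousAt.preimage_mem_nhds (hU.mem_nhds (hTU a ha))
    obtain ⟨t, hMt, htW⟩ := frequently_atTop.1 (hz.frequently hW) (M + 1)
    have hshift : ∀ c ∈ T, F^[c + t] z ∈ U := fun c hc => by
      rw [Function.iterate_add_apply]; exact Set.mem_iInter₂.1 htW c hc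
    refine ⟨insert 0 (T.map (addRightEmbedding t)), ?_, ?_, ?_⟩
    · have h0 : 0 ∉ T.map (addRightEmbedding t) := fun h => by
        obtain ⟨c, -, hc⟩ := Finset.mem_map.1 h
        rw [addRightEmbedding_apply] at hc
        omega
      rw [Finset.card_insert_of_notMem h0, Finset.card_map, hcard]
    · simp only [Finset.mem_insert, Finset.mem_map, addRightEmbedding_apply]
      rintro _ (rfl | ⟨c, hc, rfl⟩)
      exacts [hzU, hshift c hc]
    · simp only [Finset.mem_insert, Finset.mem_map, addRightEmbedding_apply]
      rintro _ (rfl | ⟨c, hc, rfl⟩) _ (rfl | ⟨d, hd, rfl⟩) hlt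
      · omega
      · exact ⟨by omega, by simpa using hshift d hd⟩
      · omega
      · rw [Nat.add_sub_add_right]; exact hgap c hc d hd (by omega)

theorem MapClusterPt.iterate_iterate (hF : Continuous F)
    (hz : MapClusterPt z atTop (fun n => F^[n] z)) {q : ℕ} (hq : 0 < q) :
    MapClusterPt z atTop (fun n => (F^[q])^[n] z) := by
  refine mapClusterPt_iff_frequently.2 fun U hU => frequently_atTop.2 fun M => ?_
  obtain ⟨V, hVU, hV, hzV⟩ := mem_nhds_iff.1 hU
  obtain ⟨T, hcard, -, hgap⟩ := exists_finset_card_eq_iterate_sub_mem hF hz hV hzV (q * M) q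
  have hreturn : ∀ a ∈ T, ∀ b ∈ T, a < b → a % q = b % q →
      ∃ n, M ≤ n ∧ (F^[q])^[n] z ∈ U := fun a ha b hb hab hmod => by
    obtain ⟨n, hn⟩ := Nat.dvd_of_mod_eq_zero (Nat.sub_mod_eq_zero_of_mod_eq hmod.symm)
    obtain ⟨hlarge, hmem⟩ := hgap a ha b hb hab
    rw [hn] at hlarge hmem
    refine ⟨n, (Nat.lt_of_mul_lt_mul_left hlarge).le, ?_⟩
    rw [← Function.iterate_mul]
    exact hVU hmem
  obtain ⟨a, ha, b, hb, hne, hmod⟩ := Finset.exists_ne_map_eq_of_card_lt_of_maps_to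
    (s := T) (t := Finset.range q) (by simp [hcard])
    fun a _ => Finset.mem_range.2 (Nat.mod_lt a hq)
  rcases hne.lt_or_gt with hab | hba
  exacts [hreturn a ha b hb hab hmod, hreturn b hb a ha hba hmod.symm]

end Recurrence

theorem MapClusterPt.exists_strictMono_pos_tendsto {X : Type*} [TopologicalSpace X]
    [FirstCountableTopology X] {u : ℕ → X} {x : X} (h : MapClusterPt x atTop u) :
    ∃ φ : ℕ → ℕ, StrictMono φ ∧ (∀ k, 0 < φ k) ∧ Tendsto (u ∘ φ) atTop (𝓝 x) := by
  obtain ⟨φ, hφ, hφx⟩ := h.tendsto_subseq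
  exact ⟨fun k => φ (k + 1), hφ.comp (strictMono_id.add_const 1),
    fun k => (Nat.zero_le _).trans_lt (hφ k.lt_succ_self), hφx.comp (tendsto_add_atTop_nat 1)⟩

/-- `S m` is the intersection number with `γ̃` of the trajectory of `z` along `m` steps of the
isotopy `I`; along `m` steps of `I^q` the trajectory is the one along `q * m` steps of `I`. -/
theorem linking_number_power
    {X : Type*} [MetricSpace X] (F : X → X) (hF : Continuous F) (z : X)
    (hrec : ∃ n : ℕ → ℕ, StrictMono n ∧ (∀ k, 0 < n k) ∧
      Tendsto (fun k => F^[n k] z) atTop (nhds z))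
    (S : ℕ → ℤ) (q : ℕ) (hq : 0 < q) (v : ℝ)
    (hv : ∀ n : ℕ → ℕ, StrictMono n → Tendsto (fun k => F^[n k] z) atTop (nhds z) →
      Tendsto (fun k => (S (n k) : ℝ) / (n k : ℝ)) atTop (nhds v)) :
    (∃ m : ℕ → ℕ, StrictMono m ∧ (∀ k, 0 < m k) ∧
      Tendsto (fun k => (F^[q])^[m k] z) atTop (nhds z)) ∧
    (∀ m : ℕ → ℕ, StrictMono m → Tendsto (fun k => (F^[q])^[m k] z) atTop (nhds z) →
      Tendsto (fun k => (S (q * m k) : ℝ) / (m k : ℝ)) atTop (nhds ((q : ℝ) * v))) := by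
  obtain ⟨n, hn, -, hnz⟩ := hrec
  have hzF : MapClusterPt z atTop (fun n => F^[n] z) := .of_comp hn.tendsto_atTop hnz.mapClusterPt
  refine ⟨(hzF.iterate_iterate hF hq).exists_strictMono_pos_tendsto, fun m hm hmz => ?_⟩
  have hqm : StrictMono (fun k => q * m k) := hm.const_mul hq
  have hqmz : Tendsto (fun k => F^[q * m k] z) atTop (𝓝 z) := by
    simpa only [Function.iterate_mul] using hmz
  refine ((hv _ hqm hqmz).const_mul (q : ℝ)).congr fun k => ?_
  rw [Nat.cast_mul, ← mul_div_assoc, mul_div_mul_left _ _ (by positivity)]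
end
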